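/- Let U ⊆ ℂ be open, let ψ : U → ℂ be holomorphic, and let L : U → ℂ be holomorphic with exp(L(w)) equal to the derivative ψ'(w) for every w ∈ U. Fix χ > 0, θ ∈ ℝ, and a function h : ψ(U) → ℝ. Let I ⊆ ℝ be an interval and let η̃ : I → U be differentiable, and suppose that the curve η := ψ ∘ η̃ satisfies η'(t) = exp(i(h(η(t))/χ + θ)) for all t ∈ I. Define h̃ : U → ℝ by h̃ := h ∘ ψ − χ·Im L. Then for all t ∈ I one has η̃'(t) = exp(−Re L(η̃(t)))·exp(i(h̃(η̃(t))/χ + θ)); in particular η̃'(t) ≠ 0 and η̃'(t)/|η̃'(t)| = exp(i(h̃(η̃(t))/χ + θ)). -/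

import Mathlib

open Complex

/-! Differentiating `η = ψ ∘ η̃` by the chain rule gives `ψ'(η̃ t) · η̃'(t) = exp(i(h(η t)/χ + θ))`.
Dividing by `ψ' = exp L` splits `exp(-L)` into the modulus `exp(-Re L)` and the rotation
`exp(-i Im L)`; the rotation is absorbed into the angle, which turns `h ∘ ψ` into
`h ∘ ψ - χ · Im L`. -/

theorem HasDerivAt.eq_div_of_comp {ψ ψ' : ℂ → ℂ} {γ : ℝ → ℂ} {γ' v : ℂ} {t : ℝ}
    (hψ : HasDerivAt ψ (ψ' (γ t)) (γ t)) (hψ' : ψ' (γ t) ≠ 0) (hγ : HasDerivAt γ γ' t)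
    (hcomp : HasDerivAt (fun s => ψ (γ s)) v t) :
    γ' = v / ψ' (γ t) := by
  rw [eq_div_iff hψ', mul_comm]
  exact (hψ.comp t hγ).unique hcomp

namespace Complex

theorem exp_I_mul_ofReal_div_exp (a : ℝ) (z : ℂ) :
    exp (I * a) / exp z = exp (-(z.re : ℂ)) * exp (I * ((a - z.im : ℝ) : ℂ)) := by
  rw [← exp_sub, ← exp_add]
  congr 1
  push_cast
  linear_combination re_add_im z

theorem norm_exp_ofReal_mul_exp_I_mul (x a : ℝ) :
    ‖exp (x : ℂ) * exp (I * a)‖ = Real.exp x := by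
  rw [norm_mul, norm_exp_ofReal, norm_exp_I_mul_ofReal, mul_one]

theorem exp_ofReal_mul_exp_I_mul_div_norm (x a : ℝ) :
    exp (x : ℂ) * exp (I * a) / ((‖exp (x : ℂ) * exp (I * a)‖ : ℝ) : ℂ) = exp (I * a) := by
  rw [norm_exp_ofReal_mul_exp_I_mul, ofReal_exp, mul_div_cancel_left₀ _ (exp_ne_zero _)]

end Complex

theorem flow_line_coordinate_change_general (U : Set ℂ)
    (ψ ψ' L : ℂ → ℂ)
    (hψ : ∀ w ∈ U, HasDerivAt ψ (ψ' w) w)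
    (hexpL : ∀ w ∈ U, Complex.exp (L w) = ψ' w)
    (χ θ : ℝ) (hχ : 0 < χ)
    (h : ℂ → ℝ)
    (I : Set ℝ)
    (η' η'deriv : ℝ → ℂ)
    (hmem : ∀ t ∈ I, η' t ∈ U)
    (hη' : ∀ t ∈ I, HasDerivAt η' (η'deriv t) t)
    (hflow : ∀ t ∈ I, HasDerivAt (fun s => ψ (η' s))
      (Complex.exp (Complex.I * ((h (ψ (η' t)) / χ + θ : ℝ) : ℂ))) t) :
    ∀ t ∈ I,
      η'deriv t = Complex.exp (-((L (η' t)).re : ℂ)) *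
        Complex.exp (Complex.I *
          (((h (ψ (η' t)) - χ * (L (η' t)).im) / χ + θ : ℝ) : ℂ)) ∧
      η'deriv t ≠ 0 ∧
      η'deriv t / ((‖η'deriv t‖ : ℝ) : ℂ) =
        Complex.exp (Complex.I *
          (((h (ψ (η' t)) - χ * (L (η' t)).im) / χ + θ : ℝ) : ℂ)) := by
  intro t ht
  have hU := hmem t ht
  have hderiv := (hψ _ hU).eq_div_of_comp (hexpL _ hU ▸ exp_ne_zero _) (hη' t ht) (hflow t ht)
  have hangle : (h (ψ (η' t)) - χ * (L (η' t)).im) / χ + θ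
      = (h (ψ (η' t)) / χ + θ) - (L (η' t)).im := by
    field_simp
    ring
  have hmain : η'deriv t = exp (-((L (η' t)).re : ℂ)) *
      exp (Complex.I * (((h (ψ (η' t)) - χ * (L (η' t)).im) / χ + θ : ℝ) : ℂ)) := by
    rw [hderiv, ← hexpL _ hU, exp_I_mul_ofReal_div_exp, hangle]
  refine ⟨hmain, hmain ▸ mul_ne_zero (exp_ne_zero _) (exp_ne_zero _), ?_⟩
  rw [hmain, ← ofReal_neg]
  exact exp_ofReal_mul_exp_I_mul_div_norm _ _

/-- The chain-rule computation behind the conformal coordinate-change rule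
`(D, h) → (ψ⁻¹(D), h∘ψ − χ·arg ψ')` for imaginary surfaces: if `η = ψ ∘ η̃` is a flow
line of `h` with angle `θ` (for the vector field `exp(i(h/χ + θ))`), `ψ` is holomorphic
on `U` with derivative `ψ' = exp ∘ L` for a holomorphic branch `L` of `log ψ'`, then the
derivative of `η̃` equals `exp(−Re L(η̃ t)) · exp(i(h̃(η̃ t)/χ + θ))` where
`h̃ = h ∘ ψ − χ · Im L`; in particular it is nonzero and its unit tangent is
`exp(i(h̃(η̃ t)/χ + θ))`. -/
theorem flow_line_coordinate_change (U : Set ℂ) (hU : IsOpen U)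
    (ψ ψ' L : ℂ → ℂ)
    (hψ : ∀ w ∈ U, HasDerivAt ψ (ψ' w) w)
    (hL : DifferentiableOn ℂ L U)
    (hexpL : ∀ w ∈ U, Complex.exp (L w) = ψ' w)
    (χ θ : ℝ) (hχ : 0 < χ)
    (h : ℂ → ℝ)
    (I : Set ℝ) (hI : I.OrdConnected)
    (η' η'deriv : ℝ → ℂ)
    (hmem : ∀ t ∈ I, η' t ∈ U)
    (hη' : ∀ t ∈ I, HasDerivAt η' (η'deriv t) t)
    (hflow : ∀ t ∈ I, HasDerivAt (fun s => ψ (η' s))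
      (Complex.exp (Complex.I * ((h (ψ (η' t)) / χ + θ : ℝ) : ℂ))) t) :
    ∀ t ∈ I,
      η'deriv t = Complex.exp (-((L (η' t)).re : ℂ)) *
        Complex.exp (Complex.I *
          (((h (ψ (η' t)) - χ * (L (η' t)).im) / χ + θ : ℝ) : ℂ)) ∧
      η'deriv t ≠ 0 ∧
      η'deriv t / ((‖η'deriv t‖ : ℝ) : ℂ) =
        Complex.exp (Complex.I *
          (((h (ψ (η' t)) - χ * (L (η' t)).im) / χ + θ : ℝ) : ℂ)) :=
  flow_line_coordinate_change_general U ψ ψ' L hψ hexpL χ θ hχ h I η' η'deriv hmem hη' hflow
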